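/- Let D ⊂ ℝ² be a bounded measurable set of positive area with rotational symmetry of order N ≥ 3, and let T be an invertible 2×2 real matrix. Then I(T D)/A(T D)² = I(T^{-1} D)/A(T^{-1} D)², where A is area and I is moment of inertia about the centroid. -/

import Mathlib

open MeasureTheory Real Set

noncomputable section

/-- The 2×2 rotation matrix by angle `θ`. -/
def rot (θ : ℝ) : Matrix (Fin 2) (Fin 2) ℝ :=
  !![Real.cos θ, -Real.sin θ; Real.sin θ, Real.cos θ]

/-- Area of a plane region. -/
def area (D : Set (Fin 2 → ℝ)) : ℝ := (volume D).toReal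

/-- Centroid of a plane region. -/
def centroid (D : Set (Fin 2 → ℝ)) (j : Fin 2) : ℝ := (∫ x in D, x j) / area D

/-- Moment of inertia about the centroid. -/
def inertia (D : Set (Fin 2 → ℝ)) : ℝ :=
  ∫ x in D, ((x 0 - centroid D 0) ^ 2 + (x 1 - centroid D 1) ^ 2)

/-! Identify ℝ² with ℂ via `toComplex`. Rotation by `θ = 2π/N` is multiplication by
`ω = exp (θ i)`, and `ω ≠ 1`, `ω² ≠ 1` because `sin θ ≠ 0`; so rotation invariance of `D` forces
`∫_D z = 0` and `∫_D z² = 0`. Every real linear form on ℝ² is `Re (c z)` and every real quadratic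
form is a multiple of `|z|²` plus `Re (c z²)`. Hence for invertible `M` the centroid of `M D` is `0`
and `I(M D) = |det M| · ‖M‖²/2 · ∫_D |x|²` (Frobenius norm), which gives
`I(M D)/A(M D)² = ‖M‖² ∫_D |x|² / (2 |det M| A(D)²)`. For 2×2 matrices `‖T⁻¹‖² = ‖T‖²/det² T`,
so this quantity takes the same value at `T` and `T⁻¹`. -/

open Matrix

section LinearImage

variable {n : ℕ} (M : Matrix (Fin n) (Fin n) ℝ)

theorem volume_image_mulVec (D : Set (Fin n → ℝ)) :
    volume ((M *ᵥ ·) '' D) = ENNReal.ofReal |M.det| * volume D := by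
  rw [← coe_mulVecLin, Measure.addHaar_image_linearMap, ← toLin'_apply', LinearMap.det_toLin']

theorem setIntegral_image_mulVec {F : Type*} [NormedAddCommGroup F] [NormedSpace ℝ F]
    (hM : IsUnit M.det) {D : Set (Fin n → ℝ)} (hD : MeasurableSet D) (g : (Fin n → ℝ) → F) :
    ∫ x in (M *ᵥ ·) '' D, g x = |M.det| • ∫ x in D, g (M *ᵥ x) := by
  have hinj : Function.Injective (M *ᵥ ·) :=
    mulVec_injective_iff_isUnit.mpr ((isUnit_iff_isUnit_det M).mpr hM)
  let L := LinearMap.toContinuousLinearMap (toLin' M)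
  have hL : ∀ x ∈ D, HasFDerivWithinAt (M *ᵥ ·) L D x := fun x _ =>
    L.hasFDerivAt.hasFDerivWithinAt
  rw [integral_image_eq_integral_abs_det_fderiv_smul volume hD hL hinj.injOn, integral_smul,
    ContinuousLinearMap.det, LinearMap.coe_toContinuousLinearMap, LinearMap.det_toLin']

theorem setIntegral_comp_mulVec_of_image_eq {F : Type*} [NormedAddCommGroup F]
    [NormedSpace ℝ F] (hM : |M.det| = 1) {D : Set (Fin n → ℝ)} (hD : MeasurableSet D)
    (hMD : (M *ᵥ ·) '' D = D) (g : (Fin n → ℝ) → F) :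
    ∫ x in D, g (M *ᵥ x) = ∫ x in D, g x := by
  have hM' : IsUnit M.det := isUnit_iff_ne_zero.mpr (abs_ne_zero.mp (hM ▸ one_ne_zero))
  conv_rhs => rw [← hMD, setIntegral_image_mulVec M hM' hD, hM, one_smul]

end LinearImage

theorem Bornology.IsBounded.integrableOn_of_continuous {n : ℕ} {D : Set (Fin n → ℝ)}
    (hD : Bornology.IsBounded D) {F : Type*} [NormedAddCommGroup F] {g : (Fin n → ℝ) → F}
    (hg : Continuous g) : IntegrableOn g D :=
  (hg.continuousOn.integrableOn_compact hD.isCompact_closure).mono_set subset_closure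

def toComplex (x : Fin 2 → ℝ) : ℂ := ⟨x 0, x 1⟩

@[fun_prop]
theorem continuous_toComplex : Continuous toComplex :=
  show Continuous fun x : Fin 2 → ℝ => Complex.equivRealProdCLM.symm (x 0, x 1) by fun_prop

theorem toComplex_rot_mulVec (θ : ℝ) (x : Fin 2 → ℝ) :
    toComplex (rot θ *ᵥ x) = Complex.exp (θ * Complex.I) * toComplex x := by
  apply Complex.ext <;>
  simp [toComplex, rot, mulVec, dotProduct, Fin.sum_univ_two, Complex.exp_ofReal_mul_I_re,
    Complex.exp_ofReal_mul_I_im] <;> ring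

theorem det_rot (θ : ℝ) : (rot θ).det = 1 := by
  simp [rot, det_fin_two_of, ← sq, cos_sq_add_sin_sq]

theorem exp_mul_I_pow_ne_one {θ : ℝ} (hθ : sin θ ≠ 0) {k : ℕ} (hk₀ : 0 < k) (hk : k ≤ 2) :
    Complex.exp (θ * Complex.I) ^ k ≠ 1 := by
  have ne_one : Complex.exp (θ * Complex.I) ≠ 1 := fun h => hθ <| by
    simpa using congrArg Complex.im h
  have ne_neg_one : Complex.exp (θ * Complex.I) ≠ -1 := fun h => hθ <| by
    simpa using congrArg Complex.im h
  obtain rfl | rfl : k = 1 ∨ k = 2 := by omega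
  · rwa [pow_one]
  · rw [sq, Ne, mul_self_eq_one_iff]
    exact not_or.mpr ⟨ne_one, ne_neg_one⟩

theorem setIntegral_toComplex_pow_eq_zero {θ : ℝ} {D : Set (Fin 2 → ℝ)} (hD : MeasurableSet D)
    (hsym : (rot θ *ᵥ ·) '' D = D) {k : ℕ} (hk : Complex.exp (θ * Complex.I) ^ k ≠ 1) :
    ∫ x in D, toComplex x ^ k = 0 := by
  have h := setIntegral_comp_mulVec_of_image_eq (rot θ) (by rw [det_rot, abs_one]) hD hsym
    (fun x => toComplex x ^ k)
  simp only [toComplex_rot_mulVec, mul_pow, integral_const_mul] at h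
  have : (Complex.exp (θ * Complex.I) ^ k - 1) * ∫ x in D, toComplex x ^ k = 0 := by
    rw [sub_mul, h, one_mul, sub_self]
  exact (mul_eq_zero.mp this).resolve_left (sub_ne_zero.mpr hk)

theorem sin_two_pi_div_pos {N : ℕ} (hN : 3 ≤ N) : 0 < sin (2 * π / N) := by
  have hN' : (3 : ℝ) ≤ N := by exact_mod_cast hN
  apply sin_pos_of_pos_of_lt_pi (by positivity)
  rw [div_lt_iff₀ (by linarith)]
  nlinarith [pi_pos]

section Moments

variable {D : Set (Fin 2 → ℝ)}

theorem setIntegral_re_mul_toComplex_pow_eq_zero (hbdd : Bornology.IsBounded D) {k : ℕ}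
    (hk : ∫ x in D, toComplex x ^ k = 0) (c : ℂ) : ∫ x in D, (c * toComplex x ^ k).re = 0 := by
  have hint : IntegrableOn (fun x => c * toComplex x ^ k) D :=
    hbdd.integrableOn_of_continuous (by fun_prop)
  refine (integral_re hint).trans ?_
  rw [integral_const_mul, hk, mul_zero, map_zero]

theorem setIntegral_mulVec_apply_eq_zero (hbdd : Bornology.IsBounded D)
    (h1 : ∫ x in D, toComplex x = 0) (M : Matrix (Fin 2) (Fin 2) ℝ) (j : Fin 2) :
    ∫ x in D, (M *ᵥ x) j = 0 := by
  have hlin : ∀ x, (M *ᵥ x) j = ((⟨M j 0, -M j 1⟩ : ℂ) * toComplex x ^ 1).re := fun x => by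
    simp [toComplex, mulVec, dotProduct, Fin.sum_univ_two]
  simp only [hlin]
  exact setIntegral_re_mul_toComplex_pow_eq_zero hbdd (by simpa using h1) _

theorem setIntegral_mulVec_normSq (hbdd : Bornology.IsBounded D)
    (h2 : ∫ x in D, toComplex x ^ 2 = 0) (M : Matrix (Fin 2) (Fin 2) ℝ) :
    ∫ x in D, ((M *ᵥ x) 0 ^ 2 + (M *ᵥ x) 1 ^ 2)
      = (M * Mᵀ).trace / 2 * ∫ x in D, (x 0 ^ 2 + x 1 ^ 2) := by
  set c : ℂ := ⟨(M 0 0 ^ 2 + M 1 0 ^ 2 - M 0 1 ^ 2 - M 1 1 ^ 2) / 2,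
    -(M 0 0 * M 0 1 + M 1 0 * M 1 1)⟩
  have hquad : ∀ x, (M *ᵥ x) 0 ^ 2 + (M *ᵥ x) 1 ^ 2
      = (M * Mᵀ).trace / 2 * (x 0 ^ 2 + x 1 ^ 2) + (c * toComplex x ^ 2).re := fun x => by
    simp [c, toComplex, mulVec, dotProduct, Fin.sum_univ_two, trace_fin_two, mul_apply, sq]
    ring
  simp only [hquad]
  rw [integral_add (hbdd.integrableOn_of_continuous (by fun_prop))
      (hbdd.integrableOn_of_continuous (by fun_prop)),
    integral_const_mul, setIntegral_re_mul_toComplex_pow_eq_zero hbdd h2, add_zero]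

end Moments

theorem area_image_mulVec (M : Matrix (Fin 2) (Fin 2) ℝ) (D : Set (Fin 2 → ℝ)) :
    area ((M *ᵥ ·) '' D) = |M.det| * area D := by
  rw [area, volume_image_mulVec, ENNReal.toReal_mul, ENNReal.toReal_ofReal (abs_nonneg _),
    area]

theorem inertia_div_area_sq_image_mulVec {D : Set (Fin 2 → ℝ)} (hD : MeasurableSet D)
    (hbdd : Bornology.IsBounded D) (h1 : ∫ x in D, toComplex x = 0)
    (h2 : ∫ x in D, toComplex x ^ 2 = 0) {M : Matrix (Fin 2) (Fin 2) ℝ} (hM : IsUnit M.det) :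
    inertia ((M *ᵥ ·) '' D) / area ((M *ᵥ ·) '' D) ^ 2
      = (M * Mᵀ).trace * (∫ x in D, (x 0 ^ 2 + x 1 ^ 2)) / (2 * |M.det| * area D ^ 2) := by
  have hcentroid : ∀ j, centroid ((M *ᵥ ·) '' D) j = 0 := fun j => by
    rw [centroid, setIntegral_image_mulVec M hM hD (· j),
      setIntegral_mulVec_apply_eq_zero hbdd h1, smul_zero, zero_div]
  have hinertia : inertia ((M *ᵥ ·) '' D)
      = |M.det| * ((M * Mᵀ).trace / 2 * ∫ x in D, (x 0 ^ 2 + x 1 ^ 2)) := by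
    simp only [inertia, hcentroid, sub_zero]
    rw [setIntegral_image_mulVec M hM hD (fun x => x 0 ^ 2 + x 1 ^ 2), smul_eq_mul,
      setIntegral_mulVec_normSq hbdd h2]
  have hdet : |M.det| ≠ 0 := abs_ne_zero.mpr hM.ne_zero
  rw [hinertia, area_image_mulVec]
  field_simp

theorem trace_nonsing_inv_mul_transpose (T : Matrix (Fin 2) (Fin 2) ℝ) :
    (T⁻¹ * T⁻¹ᵀ).trace = (T * Tᵀ).trace / T.det ^ 2 := by
  rw [inv_def, adjugate_fin_two, Ring.inverse_eq_inv', trace_fin_two, trace_fin_two]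
  simp [mul_apply, Fin.sum_univ_two]
  ring

theorem inertia_image_eq_inertia_inverse_image_general (N : ℕ) (hN : 3 ≤ N) (D : Set (Fin 2 → ℝ))
    (hmeas : MeasurableSet D) (hbdd : Bornology.IsBounded D)
    (hsym : (fun x => (rot (2 * Real.pi / (N : ℝ))).mulVec x) '' D = D)
    (T : Matrix (Fin 2) (Fin 2) ℝ) (hT : IsUnit T.det) :
    inertia ((fun x => T.mulVec x) '' D) / area ((fun x => T.mulVec x) '' D) ^ 2
      = inertia ((fun x => T⁻¹.mulVec x) '' D) / area ((fun x => T⁻¹.mulVec x) '' D) ^ 2 := by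
  have hθ := (sin_two_pi_div_pos hN).ne'
  have h1 : ∫ x in D, toComplex x = 0 := by
    simpa using setIntegral_toComplex_pow_eq_zero hmeas hsym
      (exp_mul_I_pow_ne_one hθ one_pos one_le_two)
  have h2 := setIntegral_toComplex_pow_eq_zero hmeas hsym (exp_mul_I_pow_ne_one hθ two_pos le_rfl)
  have hT' : IsUnit T⁻¹.det := T.isUnit_nonsing_inv_det hT
  rw [inertia_div_area_sq_image_mulVec hmeas hbdd h1 h2 hT,
    inertia_div_area_sq_image_mulVec hmeas hbdd h1 h2 hT', trace_nonsing_inv_mul_transpose,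
    det_nonsing_inv, Ring.inverse_eq_inv', abs_inv]
  have hdet : T.det ≠ 0 := hT.ne_zero
  field_simp
  rw [sq_abs]

/-- For a bounded measurable `D ⊂ ℝ²` of positive area with rotational symmetry of order
`N ≥ 3`, and an invertible 2×2 matrix `T`:
`I(T D)/A(T D)² = I(T⁻¹ D)/A(T⁻¹ D)²`. -/
theorem inertia_image_eq_inertia_inverse_image (N : ℕ) (hN : 3 ≤ N) (D : Set (Fin 2 → ℝ))
    (hmeas : MeasurableSet D) (hbdd : Bornology.IsBounded D) (hpos : 0 < volume D)
    (hsym : (fun x => (rot (2 * Real.pi / (N : ℝ))).mulVec x) '' D = D)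
    (T : Matrix (Fin 2) (Fin 2) ℝ) (hT : IsUnit T.det) :
    inertia ((fun x => T.mulVec x) '' D) / area ((fun x => T.mulVec x) '' D) ^ 2
      = inertia ((fun x => T⁻¹.mulVec x) '' D) / area ((fun x => T⁻¹.mulVec x) '' D) ^ 2 :=
  inertia_image_eq_inertia_inverse_image_general N hN D hmeas hbdd hsym T hT

end
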